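/- arXiv:1211.2454 — 8 statements merged into one kernel-verified Lean document; each statement's English description precedes it below -/
import Mathlib

section
/- Let D ⊂ ℂⁿ be a bounded convex open set, x ∈ ∂D, and Ch(x) the intersection of the closure of D with all complex supporting hyperplanes at x. Then Ch(x) ⊆ ch(x), where ch(x) = {y ∈ ∂D : [x,y] ⊆ ∂D}. -/
/-!
Since `D` is open and convex and `x ∉ D`, the complex Hahn–Banach theorem gives a complex
supporting functional `σ` at `x`. A point `y ∈ Ch(x)` lies on `x + ker σ`, so `Re σ y = Re σ x`,
and then the whole segment `[x, y]` lies in `closure D` (by convexity) and in the real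
hyperplane `{Re σ = Re σ x}`, which misses `D`; hence `[x, y] ⊆ ∂D`.
-/

open Set

theorem Convex.segment_subset_frontier_of_forall_lt {E : Type*} [AddCommGroup E] [Module ℝ E]
    [TopologicalSpace E] [IsTopologicalAddGroup E] [ContinuousSMul ℝ E] {D : Set E}
    (hconv : Convex ℝ D) (hopen : IsOpen D) (f : E →ₗ[ℝ] ℝ) {x y : E}
    (hf : ∀ z ∈ D, f z < f x) (hx : x ∈ closure D) (hy : y ∈ closure D) (hfy : f y = f x) :
    segment ℝ x y ⊆ frontier D := by
  have hlevel : segment ℝ x y ⊆ {w | f w = f x} :=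
    (convex_hyperplane f.isLinear (f x)).segment_subset rfl hfy
  rw [hopen.frontier_eq]
  exact fun t ht => ⟨hconv.closure.segment_subset hx hy ht,
    fun htD => (hf t htD).ne (hlevel ht)⟩

theorem Ch_subset_ch_general {n : ℕ} {D : Set (Fin n → ℂ)}
    (hconv : Convex ℝ D) (hopen : IsOpen D)
    {x : Fin n → ℂ} (hx : x ∈ frontier D) :
    (closure D ∩
      ⋂ σ ∈ {σ : (Fin n → ℂ) →ₗ[ℂ] ℂ | ∀ z ∈ D, (σ z).re < (σ x).re},
        {y : Fin n → ℂ | y - x ∈ LinearMap.ker σ})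
      ⊆ {y ∈ frontier D | segment ℝ x y ⊆ frontier D} := by
  have hxD : x ∉ D := (hopen.frontier_eq ▸ hx).2
  obtain ⟨σ, hσ⟩ := RCLike.geometric_hahn_banach_open_point (𝕜 := ℂ) hconv hopen hxD
  rintro y ⟨hyD, hyCh⟩
  have hσy : σ y = σ x := by
    simpa [sub_eq_zero] using mem_iInter₂.1 hyCh σ.toLinearMap hσ
  let f : (Fin n → ℂ) →ₗ[ℝ] ℝ := Complex.reLm.comp (σ.toLinearMap.restrictScalars ℝ)
  have hseg : segment ℝ x y ⊆ frontier D :=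
    hconv.segment_subset_frontier_of_forall_lt hopen f hσ hx.1 hyD (congrArg Complex.re hσy)
  exact ⟨hseg (right_mem_segment ℝ x y), hseg⟩

/-- For a bounded convex open set `D ⊆ ℂⁿ` and `x ∈ ∂D`, the set `Ch(x)`
(intersection of `closure D` with all complex supporting hyperplanes at `x`)
is contained in `ch(x) = {y ∈ ∂D : [x,y] ⊆ ∂D}`. -/
theorem Ch_subset_ch {n : ℕ} {D : Set (Fin n → ℂ)}
    (hconv : Convex ℝ D) (hopen : IsOpen D) (hbd : Bornology.IsBounded D)
    {x : Fin n → ℂ} (hx : x ∈ frontier D) :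
    (closure D ∩
      ⋂ σ ∈ {σ : (Fin n → ℂ) →ₗ[ℂ] ℂ | ∀ z ∈ D, (σ z).re < (σ x).re},
        {y : Fin n → ℂ | y - x ∈ LinearMap.ker σ})
      ⊆ {y ∈ frontier D | segment ℝ x y ⊆ frontier D} :=
  Ch_subset_ch_general hconv hopen hx
end

section
/- Let D ⊂ ℂⁿ be a bounded convex open set with Kobayashi distance k_D (which is a complete distance whose bounded subsets are relatively compact in D, and which satisfies k_D(s z₁ + (1-s)w₁, s z₂ + (1-s)w₂) ≤ max(k_D(z₁,z₂), k_D(w₁,w₂)) for s ∈ [0,1]). Let x, y ∈ ∂D and let {z_ν}, {w_ν} ⊂ D be sequences converging to x and y respectively with sup_ν k_D(z_ν, w_ν) < +∞. Then the closed segment [x,y] is contained in ∂D. -/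
/-!
Suppose a point `p = a x + b y` of the segment lay in `D`. The points `σ_ν = a z_ν + b w_ν`
tend to `p` and, by the convexity estimate, stay `k`-close to `w_ν`. For `t < 1` write
`p = t σ_ν + (1 - t) r_ν`; since `r_ν → p`, eventually `r_ν ∈ D`, and then
`m_ν = t w_ν + (1 - t) r_ν = p + t (w_ν - σ_ν)` is `k`-close to `p` and tends to
`p + t (y - p)`. Letting `t → 1`, `y` lies in the closure of a `k`-ball around `p`, hence in `D`,
which is absurd.
-/

open Filter Topology Set

section

variable {E : Type*} [AddCommGroup E] [Module ℝ E]

/-- For convex `D` this is the quasiconvexity of `Function.uncurry k` on `D ×ˢ D`. -/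
def IsJointlyQuasiconvexOn (D : Set E) (k : E → E → ℝ) : Prop :=
  ∀ z₁ ∈ D, ∀ z₂ ∈ D, ∀ w₁ ∈ D, ∀ w₂ ∈ D, ∀ s ∈ Icc (0 : ℝ) 1,
    k (s • z₁ + (1 - s) • w₁) (s • z₂ + (1 - s) • w₂) ≤
      max (k z₁ z₂) (k w₁ w₂)

variable [TopologicalSpace E] [IsTopologicalAddGroup E] [ContinuousSMul ℝ E]
  {D : Set E} {k : E → E → ℝ} {ι : Type*} {l : Filter ι} [l.NeBot]
  {σ w : ι → E} {p y : E} {C : ℝ}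

theorem add_smul_sub_mem_closure_setOf_le (hD : IsOpen D) (hconv : Convex ℝ D)
    (hk : IsJointlyQuasiconvexOn D k) (hk_self : ∀ z ∈ D, k z z = 0) (hC : 0 ≤ C)
    (hp : p ∈ D) (hσ : Tendsto σ l (𝓝 p)) (hw : Tendsto w l (𝓝 y))
    (hσD : ∀ i, σ i ∈ D) (hwD : ∀ i, w i ∈ D) (hσw : ∀ i, k (σ i) (w i) ≤ C)
    {t : ℝ} (ht : t ∈ Ico 0 1) :
    p + t • (y - p) ∈ closure {m ∈ D | k p m ≤ C} := by
  obtain ⟨ht₀, ht₁⟩ := ht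
  have h1t : 1 - t ≠ 0 := (sub_pos.2 ht₁).ne'
  set r : ι → E := fun i ↦ (1 - t)⁻¹ • (p - t • σ i)
  have hr : Tendsto r l (𝓝 p) := by
    have hlim : (1 - t)⁻¹ • (p - t • p) = p := by
      rw [show p - t • p = (1 - t) • p by module, inv_smul_smul₀ h1t]
    simpa only [hlim] using
      ((tendsto_const_nhds (x := p)).sub (hσ.const_smul t)).const_smul (1 - t)⁻¹
  have hp_eq : ∀ i, t • σ i + (1 - t) • r i = p := fun i ↦ by
    simp only [r, smul_inv_smul₀ h1t, add_sub_cancel]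
  have hm_eq : ∀ i, p + t • (w i - σ i) = t • w i + (1 - t) • r i := fun i ↦ by
    rw [← hp_eq i]; module
  refine mem_closure_of_tendsto
    ((tendsto_const_nhds.add ((hw.sub hσ).const_smul t)).congr hm_eq) ?_
  filter_upwards [hr (hD.mem_nhds hp)] with i hri
  refine ⟨hconv (hwD i) hri ht₀ (sub_pos.2 ht₁).le (by ring), ?_⟩
  calc k p (t • w i + (1 - t) • r i)
      = k (t • σ i + (1 - t) • r i) (t • w i + (1 - t) • r i) := by rw [hp_eq]
    _ ≤ max (k (σ i) (w i)) (k (r i) (r i)) :=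
        hk _ (hσD i) _ (hwD i) _ hri _ hri t ⟨ht₀, ht₁.le⟩
    _ ≤ C := by rw [hk_self _ hri]; exact max_le (hσw i) hC

theorem mem_closure_setOf_le_of_tendsto (hD : IsOpen D) (hconv : Convex ℝ D)
    (hk : IsJointlyQuasiconvexOn D k) (hk_self : ∀ z ∈ D, k z z = 0) (hC : 0 ≤ C)
    (hp : p ∈ D) (hσ : Tendsto σ l (𝓝 p)) (hw : Tendsto w l (𝓝 y))
    (hσD : ∀ i, σ i ∈ D) (hwD : ∀ i, w i ∈ D) (hσw : ∀ i, k (σ i) (w i) ≤ C) :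
    y ∈ closure {m ∈ D | k p m ≤ C} := by
  set f : ℝ → E := fun t ↦ p + t • (y - p)
  have hcont : Continuous f := by fun_prop
  have hy : y ∈ f '' closure (Ico 0 1) := ⟨1, by simp [closure_Ico zero_ne_one], by simp [f]⟩
  have hsub : f '' Ico 0 1 ⊆ closure {m ∈ D | k p m ≤ C} := by
    rintro _ ⟨t, ht, rfl⟩
    exact add_smul_sub_mem_closure_setOf_le hD hconv hk hk_self hC hp hσ hw hσD hwD hσw ht
  simpa only [closure_closure] using closure_mono hsub (image_closure_subset_closure_image hcont hy)

end

theorem segment_subset_frontier_of_bounded_kobayashi_general {n : ℕ}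
    {D : Set (Fin n → ℂ)} (hconv : Convex ℝ D) (hopen : IsOpen D)
    (k : (Fin n → ℂ) → (Fin n → ℂ) → ℝ)
    -- `k` is a distance on `D`:
    (hk_eq_zero : ∀ z ∈ D, ∀ w ∈ D, (k z w = 0 ↔ z = w))
    -- (a) `k`-bounded subsets of `D` are relatively compact in `D`:
    (hk_proper : ∀ S ⊆ D, (∃ z₀ ∈ D, ∃ c : ℝ, ∀ z ∈ S, k z₀ z ≤ c) →
      IsCompact (closure S) ∧ closure S ⊆ D)
    -- (b) convexity estimate:
    (hk_convex : ∀ z₁ ∈ D, ∀ z₂ ∈ D, ∀ w₁ ∈ D, ∀ w₂ ∈ D, ∀ s ∈ Set.Icc (0:ℝ) 1,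
      k (s • z₁ + (1 - s) • w₁) (s • z₂ + (1 - s) • w₂) ≤ max (k z₁ z₂) (k w₁ w₂))
    {x y : Fin n → ℂ} (hy : y ∈ frontier D)
    {zs ws : ℕ → Fin n → ℂ} (hzs : ∀ ν, zs ν ∈ D) (hws : ∀ ν, ws ν ∈ D)
    (hzx : Filter.Tendsto zs Filter.atTop (nhds x))
    (hwy : Filter.Tendsto ws Filter.atTop (nhds y))
    {c : ℝ} (hc : ∀ ν, k (zs ν) (ws ν) ≤ c) :
    segment ℝ x y ⊆ frontier D := by
  rintro _ ⟨a, b, ha, hb, hab, rfl⟩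
  obtain rfl : b = 1 - a := by linarith
  have hk_self : ∀ z ∈ D, k z z = 0 := fun z hz ↦ (hk_eq_zero z hz z hz).2 rfl
  set σ := fun ν ↦ a • zs ν + (1 - a) • ws ν
  have hσD : ∀ ν, σ ν ∈ D := fun ν ↦ hconv (hzs ν) (hws ν) ha hb hab
  have hσ : Tendsto σ atTop (𝓝 (a • x + (1 - a) • y)) :=
    (hzx.const_smul a).add (hwy.const_smul (1 - a))
  have hσw : ∀ ν, k (σ ν) (ws ν) ≤ max c 0 := fun ν ↦
    calc k (σ ν) (ws ν) = k (σ ν) (a • ws ν + (1 - a) • ws ν) := by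
          rw [Convex.combo_self hab]
      _ ≤ max (k (zs ν) (ws ν)) (k (ws ν) (ws ν)) :=
          hk_convex _ (hzs ν) _ (hws ν) _ (hws ν) _ (hws ν) a ⟨ha, by linarith⟩
      _ ≤ max c 0 := by rw [hk_self _ (hws ν)]; exact max_le_max_right 0 (hc ν)
  rw [hopen.frontier_eq] at hy ⊢
  refine ⟨mem_closure_of_tendsto hσ (.of_forall hσD), fun hpD ↦ hy.2 ?_⟩
  have hy_mem := mem_closure_setOf_le_of_tendsto hopen hconv hk_convex hk_self
    (le_max_right c 0) hpD hσ hwy hσD hws hσw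
  exact (hk_proper _ (sep_subset _ _) ⟨_, hpD, max c 0, fun _ hm ↦ hm.2⟩).2 hy_mem

/-- Let `D ⊆ ℂⁿ` be a bounded convex open set and `k` a distance on `D`
(e.g. the Kobayashi distance) such that `k`-bounded subsets of `D` are
relatively compact in `D` and such that `k` satisfies the convexity estimate
`k(s z₁+(1-s)w₁, s z₂+(1-s)w₂) ≤ max (k z₁ z₂) (k w₁ w₂)`.  If `zs`, `ws` are
sequences in `D` converging to boundary points `x`, `y`, with
`sup_ν k (zs ν) (ws ν) < ∞`, then the closed segment `[x,y]` is contained in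
`∂D`. -/
theorem segment_subset_frontier_of_bounded_kobayashi {n : ℕ}
    {D : Set (Fin n → ℂ)} (hconv : Convex ℝ D) (hopen : IsOpen D)
    (hbd : Bornology.IsBounded D)
    (k : (Fin n → ℂ) → (Fin n → ℂ) → ℝ)
    -- `k` is a distance on `D`:
    (hk_nonneg : ∀ z ∈ D, ∀ w ∈ D, 0 ≤ k z w)
    (hk_eq_zero : ∀ z ∈ D, ∀ w ∈ D, (k z w = 0 ↔ z = w))
    (hk_symm : ∀ z ∈ D, ∀ w ∈ D, k z w = k w z)
    (hk_triangle : ∀ z ∈ D, ∀ w ∈ D, ∀ u ∈ D, k z u ≤ k z w + k w u)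
    -- (a) `k`-bounded subsets of `D` are relatively compact in `D`:
    (hk_proper : ∀ S ⊆ D, (∃ z₀ ∈ D, ∃ c : ℝ, ∀ z ∈ S, k z₀ z ≤ c) →
      IsCompact (closure S) ∧ closure S ⊆ D)
    -- (b) convexity estimate:
    (hk_convex : ∀ z₁ ∈ D, ∀ z₂ ∈ D, ∀ w₁ ∈ D, ∀ w₂ ∈ D, ∀ s ∈ Set.Icc (0:ℝ) 1,
      k (s • z₁ + (1 - s) • w₁) (s • z₂ + (1 - s) • w₂) ≤ max (k z₁ z₂) (k w₁ w₂))
    {x y : Fin n → ℂ} (hx : x ∈ frontier D) (hy : y ∈ frontier D)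
    {zs ws : ℕ → Fin n → ℂ} (hzs : ∀ ν, zs ν ∈ D) (hws : ∀ ν, ws ν ∈ D)
    (hzx : Filter.Tendsto zs Filter.atTop (nhds x))
    (hwy : Filter.Tendsto ws Filter.atTop (nhds y))
    {c : ℝ} (hc : ∀ ν, k (zs ν) (ws ν) ≤ c) :
    segment ℝ x y ⊆ frontier D :=
  segment_subset_frontier_of_bounded_kobayashi_general hconv hopen k hk_eq_zero hk_proper hk_convex
    hy hzs hws hzx hwy hc
end

section
/- Let D ⊂ ℂⁿ be a bounded convex open set, x a strictly convex boundary point (i.e., ch(x) = {x}), and suppose sequences {z_ν}, {w_ν} in D converge to boundary points x and y respectively with sup_ν k_D(z_ν, w_ν) < +∞, where k_D satisfies the convexity estimate k_D(s z₁+(1-s)w₁, s z₂+(1-s)w₂) ≤ max(k_D(z₁,z₂), k_D(w₁,w₂)) and k_D-bounded sets are relatively compact in D. Then x = y. -/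
/-!
Suppose a point `p` of the segment `[x, y]` lay in `D`. The points `u_ν` on `[z_ν, w_ν]` with
the same barycentric coordinates as `p` converge to `p` and, by the convexity estimate, stay at
bounded `k`-distance from `z_ν`. Write `p = s_ν u_ν + (1 - s_ν) b_ν` with `b_ν` in a fixed ball
around `p` inside `D` and `s_ν → 1`; applying the convexity estimate once more, the points
`s_ν z_ν + (1 - s_ν) b_ν` are at bounded `k`-distance from the fixed point `p` and still converge
to `x`. Properness of `k` then puts `x` in `D`, which is absurd. Hence `[x, y] ⊆ ∂D`, and strict
convexity at `x` gives `y = x`.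
-/

open Filter Metric Set Topology

variable {E : Type*} [NormedAddCommGroup E] [NormedSpace ℝ E]

theorem exists_smul_add_one_sub_smul_eq (p u : E) {r : ℝ} (hr : 0 < r) :
    ∃ s ∈ Icc (0 : ℝ) 1, ∃ b ∈ closedBall p r, s • u + (1 - s) • b = p ∧ 1 - s ≤ dist u p / r := by
  rcases eq_or_ne u p with rfl | hup
  · exact ⟨1, right_mem_Icc.2 zero_le_one, u, mem_closedBall_self hr.le, by simp, by simp⟩
  set t := dist u p
  have ht : 0 < t := dist_pos.2 hup
  -- `b` lies on the ray from `u` through `p`, at distance `r` beyond `p`.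
  refine ⟨r / (r + t), ⟨by positivity, div_le_one_of_le₀ (by linarith) (by positivity)⟩,
    p + (r / t) • (p - u), ?_, ?_, ?_⟩
  · rw [mem_closedBall, dist_eq_norm, add_sub_cancel_left, norm_smul, ← dist_eq_norm,
      dist_comm, Real.norm_of_nonneg (div_pos hr ht).le, div_mul_cancel₀ r ht.ne']
  · match_scalars <;> field_simp <;> ring
  · rw [one_sub_div (add_pos hr ht).ne', add_sub_cancel_left]
    exact div_le_div_of_nonneg_left ht.le hr (by linarith)

section ConvexityEstimate

variable {D : Set E} {k : E → E → ℝ}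

def HasConvexityEstimate (D : Set E) (k : E → E → ℝ) : Prop :=
  ∀ z₁ ∈ D, ∀ z₂ ∈ D, ∀ w₁ ∈ D, ∀ w₂ ∈ D, ∀ s ∈ Icc (0 : ℝ) 1,
    k (s • z₁ + (1 - s) • w₁) (s • z₂ + (1 - s) • w₂) ≤ max (k z₁ z₂) (k w₁ w₂)

theorem HasConvexityEstimate.le_of_shared_point (hk : HasConvexityEstimate D k)
    (hk_nonneg : ∀ z ∈ D, ∀ w ∈ D, 0 ≤ k z w) (hk_self : ∀ z ∈ D, k z z = 0)
    {u z b : E} (hu : u ∈ D) (hz : z ∈ D) (hb : b ∈ D) {s : ℝ} (hs : s ∈ Icc (0 : ℝ) 1) :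
    k (s • u + (1 - s) • b) (s • z + (1 - s) • b) ≤ k u z :=
  (hk u hu z hz b hb b hb s hs).trans_eq <| by
    rw [hk_self b hb, max_eq_left (hk_nonneg u hu z hz)]

theorem HasConvexityEstimate.exists_near_of_closedBall_subset (hk : HasConvexityEstimate D k)
    (hD : Convex ℝ D) (hk_nonneg : ∀ z ∈ D, ∀ w ∈ D, 0 ≤ k z w)
    (hk_self : ∀ z ∈ D, k z z = 0) {p u z : E} (hu : u ∈ D) (hz : z ∈ D) {r : ℝ} (hr : 0 < r)
    (hball : closedBall p r ⊆ D) :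
    ∃ z' ∈ D, k p z' ≤ k u z ∧ dist z z' ≤ dist u p / r * (r + dist p z) := by
  obtain ⟨s, hs, b, hb, hp, hs_le⟩ := exists_smul_add_one_sub_smul_eq p u hr
  refine ⟨s • z + (1 - s) • b, hD hz (hball hb) hs.1 (sub_nonneg.2 hs.2) (by ring), ?_, ?_⟩
  · simpa only [hp] using hk.le_of_shared_point hk_nonneg hk_self hu hz (hball hb) hs
  · have hbz : dist b z ≤ r + dist p z := by
      linarith [dist_triangle b p z, mem_closedBall.1 hb]
    calc dist z (s • z + (1 - s) • b)
        = (1 - s) * dist b z := by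
          rw [show s • z + (1 - s) • b = z + (1 - s) • (b - z) by module, dist_self_add_right,
            norm_smul, Real.norm_of_nonneg (sub_nonneg.2 hs.2), dist_eq_norm]
      _ ≤ dist u p / r * (r + dist p z) :=
          mul_le_mul hs_le hbz dist_nonneg (by positivity)

theorem HasConvexityEstimate.mem_of_tendsto (hk : HasConvexityEstimate D k) (hD : Convex ℝ D)
    (hk_nonneg : ∀ z ∈ D, ∀ w ∈ D, 0 ≤ k z w) (hk_self : ∀ z ∈ D, k z z = 0)
    (hk_proper : ∀ S ⊆ D, (∃ z₀ ∈ D, ∃ c : ℝ, ∀ z ∈ S, k z₀ z ≤ c) → closure S ⊆ D)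
    {p x : E} (hp : D ∈ 𝓝 p) {us zs : ℕ → E} (hus : ∀ ν, us ν ∈ D) (hzs : ∀ ν, zs ν ∈ D)
    (hup : Tendsto us atTop (𝓝 p)) (hzx : Tendsto zs atTop (𝓝 x))
    {c : ℝ} (hc : ∀ ν, k (us ν) (zs ν) ≤ c) :
    x ∈ D := by
  obtain ⟨r, hr, hball⟩ := nhds_basis_closedBall.mem_iff.1 hp
  choose zs' hzs'D hk_zs' hdist using fun ν =>
    hk.exists_near_of_closedBall_subset hD hk_nonneg hk_self (hus ν) (hzs ν) hr hball
  have hbound : Tendsto (fun ν => dist (us ν) p / r * (r + dist p (zs ν))) atTop (𝓝 0) := by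
    simpa using ((tendsto_iff_dist_tendsto_zero.1 hup).div_const r).mul
      (tendsto_const_nhds.add (tendsto_const_nhds.dist hzx))
  have hzs'x : Tendsto zs' atTop (𝓝 x) :=
    hzx.congr_dist (squeeze_zero (fun _ => dist_nonneg) hdist hbound)
  exact hk_proper (range zs') (range_subset_iff.2 hzs'D)
    ⟨p, mem_of_mem_nhds hp, c, forall_mem_range.2 fun ν => (hk_zs' ν).trans (hc ν)⟩
    (mem_closure_of_tendsto hzs'x (Eventually.of_forall mem_range_self))

end ConvexityEstimate

theorem eq_of_strictly_convex_point_general {n : ℕ}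
    {D : Set (Fin n → ℂ)} (hconv : Convex ℝ D) (hopen : IsOpen D)
    (k : (Fin n → ℂ) → (Fin n → ℂ) → ℝ)
    -- `k` is a distance on `D`:
    (hk_nonneg : ∀ z ∈ D, ∀ w ∈ D, 0 ≤ k z w)
    (hk_eq_zero : ∀ z ∈ D, ∀ w ∈ D, (k z w = 0 ↔ z = w))
    (hk_symm : ∀ z ∈ D, ∀ w ∈ D, k z w = k w z)
    -- `k`-bounded subsets of `D` are relatively compact in `D`:
    (hk_proper : ∀ S ⊆ D, (∃ z₀ ∈ D, ∃ c : ℝ, ∀ z ∈ S, k z₀ z ≤ c) →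
      IsCompact (closure S) ∧ closure S ⊆ D)
    -- convexity estimate:
    (hk_convex : ∀ z₁ ∈ D, ∀ z₂ ∈ D, ∀ w₁ ∈ D, ∀ w₂ ∈ D, ∀ s ∈ Set.Icc (0:ℝ) 1,
      k (s • z₁ + (1 - s) • w₁) (s • z₂ + (1 - s) • w₂) ≤ max (k z₁ z₂) (k w₁ w₂))
    {x y : Fin n → ℂ} (hx : x ∈ frontier D) (hy : y ∈ frontier D)
    -- `x` is a strictly convex point: `ch(x) = {x}`:
    (hstrict : ∀ y' ∈ frontier D, segment ℝ x y' ⊆ frontier D → y' = x)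
    {zs ws : ℕ → Fin n → ℂ} (hzs : ∀ ν, zs ν ∈ D) (hws : ∀ ν, ws ν ∈ D)
    (hzx : Filter.Tendsto zs Filter.atTop (nhds x))
    (hwy : Filter.Tendsto ws Filter.atTop (nhds y))
    {c : ℝ} (hc : ∀ ν, k (zs ν) (ws ν) ≤ c) :
    x = y := by
  have hk : HasConvexityEstimate D k := hk_convex
  have hk_self : ∀ z ∈ D, k z z = 0 := fun z hz => (hk_eq_zero z hz z hz).2 rfl
  have hx_notMem : x ∉ D := (hopen.frontier_eq ▸ hx).2
  refine (hstrict y hy fun p hp => ?_).symm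
  rw [hopen.frontier_eq]
  refine ⟨hconv.closure.segment_subset (frontier_subset_closure hx)
    (frontier_subset_closure hy) hp, fun hpD => hx_notMem ?_⟩
  obtain ⟨θ, hθ, rfl⟩ := (segment_eq_image ℝ x y).subset hp
  set us : ℕ → Fin n → ℂ := fun ν => θ • ws ν + (1 - θ) • zs ν
  have hus : ∀ ν, us ν ∈ D := fun ν => hconv (hws ν) (hzs ν) hθ.1 (sub_nonneg.2 hθ.2) (by ring)
  have hus_tendsto : Tendsto us atTop (𝓝 ((1 - θ) • x + θ • y)) := by
    simpa only [add_comm] using (hwy.const_smul θ).add (hzx.const_smul (1 - θ))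
  have hus_zs : ∀ ν, k (us ν) (zs ν) ≤ c := fun ν => by
    have h := hk.le_of_shared_point hk_nonneg hk_self (hws ν) (hzs ν) (hzs ν) hθ
    rw [← add_smul, add_sub_cancel, one_smul] at h
    exact h.trans ((hk_symm _ (hws ν) _ (hzs ν)).symm ▸ hc ν)
  exact hk.mem_of_tendsto hconv hk_nonneg hk_self (fun S hS hbdd => (hk_proper S hS hbdd).2)
    (hopen.mem_nhds hpD) hus hzs hus_tendsto hzx hus_zs

/-- Let `D ⊆ ℂⁿ` be a bounded convex open set, `x ∈ ∂D` a strictly convex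
boundary point, and `k` a distance on `D` satisfying the convexity estimate
and whose bounded sets are relatively compact in `D`.  If sequences in `D`
converge to `x` and to `y ∈ ∂D` while remaining at bounded `k`-distance,
then `x = y`. -/
theorem eq_of_strictly_convex_point {n : ℕ}
    {D : Set (Fin n → ℂ)} (hconv : Convex ℝ D) (hopen : IsOpen D)
    (hbd : Bornology.IsBounded D)
    (k : (Fin n → ℂ) → (Fin n → ℂ) → ℝ)
    -- `k` is a distance on `D`:
    (hk_nonneg : ∀ z ∈ D, ∀ w ∈ D, 0 ≤ k z w)
    (hk_eq_zero : ∀ z ∈ D, ∀ w ∈ D, (k z w = 0 ↔ z = w))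
    (hk_symm : ∀ z ∈ D, ∀ w ∈ D, k z w = k w z)
    (hk_triangle : ∀ z ∈ D, ∀ w ∈ D, ∀ u ∈ D, k z u ≤ k z w + k w u)
    -- `k`-bounded subsets of `D` are relatively compact in `D`:
    (hk_proper : ∀ S ⊆ D, (∃ z₀ ∈ D, ∃ c : ℝ, ∀ z ∈ S, k z₀ z ≤ c) →
      IsCompact (closure S) ∧ closure S ⊆ D)
    -- convexity estimate:
    (hk_convex : ∀ z₁ ∈ D, ∀ z₂ ∈ D, ∀ w₁ ∈ D, ∀ w₂ ∈ D, ∀ s ∈ Set.Icc (0:ℝ) 1,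
      k (s • z₁ + (1 - s) • w₁) (s • z₂ + (1 - s) • w₂) ≤ max (k z₁ z₂) (k w₁ w₂))
    {x y : Fin n → ℂ} (hx : x ∈ frontier D) (hy : y ∈ frontier D)
    -- `x` is a strictly convex point: `ch(x) = {x}`:
    (hstrict : ∀ y' ∈ frontier D, segment ℝ x y' ⊆ frontier D → y' = x)
    {zs ws : ℕ → Fin n → ℂ} (hzs : ∀ ν, zs ν ∈ D) (hws : ∀ ν, ws ν ∈ D)
    (hzx : Filter.Tendsto zs Filter.atTop (nhds x))
    (hwy : Filter.Tendsto ws Filter.atTop (nhds y))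
    {c : ℝ} (hc : ∀ ν, k (zs ν) (ws ν) ≤ c) :
    x = y :=
  eq_of_strictly_convex_point_general hconv hopen k hk_nonneg hk_eq_zero hk_symm hk_proper hk_convex
    hx hy hstrict hzs hws hzx hwy hc
end

section
/- Let D ⊂ ℂⁿ be a bounded convex open set, X a connected complex manifold, and h : X → ℂⁿ a holomorphic map with h(X) ⊆ closure(D) and h(X) ∩ ∂D ≠ ∅. Then h(X) ⊆ ∂D, and for every x₀ ∈ X and every complex supporting hyperplane L at h(x₀), h(X) ⊆ L; hence h(X) ⊆ ⋂_{x ∈ X} Ch(h(x)). -/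
/-!
If `σ` is a complex supporting functional at a point `h x₀` of `closure D`, then `Re (σ ∘ h)`
attains its maximum at `x₀`. By the maximum modulus principle applied to `exp (σ ∘ h)`, the map
`exp ∘ σ ∘ h` is constant, and since `exp` is a covering map, so is `σ ∘ h` on the connected
manifold `X`; that is, `h(X)` lies in the supporting hyperplane. Once one point of `h(X)` lies on
`∂D`, Hahn–Banach gives a supporting functional there, whose real part is strictly smaller on `D`,
so no point of `h(X)` can lie in `D`.
-/

open scoped Manifold

section MaximumPrinciple

variable {E : Type*} [NormedAddCommGroup E] [NormedSpace ℂ E]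
  {H : Type*} [TopologicalSpace H] {I : ModelWithCorners ℂ E H} [I.Boundaryless]
  {M : Type*} [TopologicalSpace M] [ChartedSpace H M] [IsManifold I 1 M] [PreconnectedSpace M]

theorem MDifferentiable.apply_eq_of_forall_re_le {f : M → ℂ} (hf : MDifferentiable I 𝓘(ℂ) f)
    {c : M} (hmax : ∀ x, (f x).re ≤ (f c).re) (x : M) : f x = f c := by
  have hexp : ∀ x, Complex.exp (f x) = Complex.exp (f c) := fun x =>
    (Complex.differentiable_exp.mdifferentiable.comp hf).mdifferentiableOn
      |>.eqOn_of_isPreconnected_of_isMaxOn_norm isPreconnected_univ isOpen_univ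
        (Set.mem_univ c) (fun y _ => by simpa [Complex.norm_exp] using hmax y) (Set.mem_univ x)
  exact Complex.isCoveringMap_exp.const_of_comp hf.continuous
    (fun a b => Subtype.ext ((hexp a).trans (hexp b).symm)) x c

theorem MDifferentiable.apply_eq_of_supporting {F : Type*} [NormedAddCommGroup F]
    [NormedSpace ℂ F] {D : Set F} {h : M → F} (hh : MDifferentiable I 𝓘(ℂ, F) h)
    (hcl : ∀ p, h p ∈ closure D) (σ : F →L[ℂ] ℂ) {c : M}
    (hσ : ∀ z ∈ D, (σ z).re ≤ (σ (h c)).re) (p : M) : σ (h p) = σ (h c) := by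
  have hclosure : closure D ⊆ {z | (σ z).re ≤ (σ (h c)).re} :=
    closure_minimal hσ (isClosed_le (by fun_prop) continuous_const)
  exact (σ.differentiable.mdifferentiable.comp hh).apply_eq_of_forall_re_le
    (fun x => hclosure (hcl x)) p

end MaximumPrinciple

theorem exists_complex_functional_re_lt_of_notMem {F : Type*} [NormedAddCommGroup F]
    [NormedSpace ℂ F] {D : Set F} (hconv : Convex ℝ D) (hopen : IsOpen D) {x : F}
    (hx : x ∉ D) : ∃ σ : F →L[ℂ] ℂ, ∀ z ∈ D, (σ z).re < (σ x).re := by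
  obtain ⟨g, hg⟩ := geometric_hahn_banach_open_point hconv hopen hx
  have hre (y : F) : (StrongDual.extendRCLike (𝕜 := ℂ) g y).re = g y :=
    StrongDual.re_extendRCLike_apply (𝕜 := ℂ) g y
  exact ⟨StrongDual.extendRCLike g, fun z hz => by simpa only [hre] using hg z hz⟩

theorem holomorphic_image_in_frontier_general {n m : ℕ} {D : Set (Fin n → ℂ)}
    (hconv : Convex ℝ D) (hopen : IsOpen D)
    {X : Type*} [TopologicalSpace X]
    [ChartedSpace (EuclideanSpace ℂ (Fin m)) X]
    [IsManifold 𝓘(ℂ, EuclideanSpace ℂ (Fin m)) (⊤ : ℕ∞) X]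
    [ConnectedSpace X]
    {h : X → (Fin n → ℂ)}
    (hhol : MDifferentiable 𝓘(ℂ, EuclideanSpace ℂ (Fin m))
      𝓘(ℂ, Fin n → ℂ) h)
    (hcl : ∀ p : X, h p ∈ closure D)
    (hfront : ∃ p : X, h p ∈ frontier D) :
    (∀ p : X, h p ∈ frontier D) ∧
    (∀ x₀ : X, ∀ σ : (Fin n → ℂ) →ₗ[ℂ] ℂ,
      (∀ z ∈ D, (σ z).re < (σ (h x₀)).re) →
      ∀ p : X, h p ∈ {y : Fin n → ℂ | y - h x₀ ∈ LinearMap.ker σ}) ∧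
    (∀ p : X, h p ∈ ⋂ x : X, (closure D ∩
      ⋂ σ ∈ {σ : (Fin n → ℂ) →ₗ[ℂ] ℂ | ∀ z ∈ D, (σ z).re < (σ (h x)).re},
        {y : Fin n → ℂ | y - h x ∈ LinearMap.ker σ})) := by
  have in_hyperplane : ∀ (x₀ : X) (σ : (Fin n → ℂ) →ₗ[ℂ] ℂ),
      (∀ z ∈ D, (σ z).re < (σ (h x₀)).re) → ∀ p, h p - h x₀ ∈ LinearMap.ker σ :=
    fun x₀ σ hσ p => by
      simpa [sub_eq_zero] using hhol.apply_eq_of_supporting hcl (LinearMap.toContinuousLinearMap σ)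
        (fun z hz => (hσ z hz).le) p
  refine ⟨fun p => ?_, in_hyperplane, fun p => Set.mem_iInter.2 fun x =>
    ⟨hcl p, Set.mem_iInter₂.2 fun σ hσ => in_hyperplane x σ hσ p⟩⟩
  obtain ⟨p₁, hp₁⟩ := hfront
  rw [hopen.frontier_eq] at hp₁ ⊢
  obtain ⟨σ, hσ⟩ := exists_complex_functional_re_lt_of_notMem hconv hopen hp₁.2
  have hσp : σ (h p) = σ (h p₁) :=
    hhol.apply_eq_of_supporting hcl σ (fun z hz => (hσ z hz).le) p
  exact ⟨hcl p, fun hpD => (hσ _ hpD).ne (congrArg Complex.re hσp)⟩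

/-- Let `D ⊆ ℂⁿ` be a bounded convex open set, `X` a connected complex
manifold and `h : X → ℂⁿ` holomorphic with `h(X) ⊆ closure D` and
`h(X) ∩ ∂D ≠ ∅`.  Then `h(X) ⊆ ∂D`; moreover `h(X)` is contained in every
complex supporting hyperplane at any point `h(x₀)`, and hence
`h(X) ⊆ ⋂_{x ∈ X} Ch(h(x))`. -/
theorem holomorphic_image_in_frontier {n m : ℕ} {D : Set (Fin n → ℂ)}
    (hconv : Convex ℝ D) (hopen : IsOpen D) (hbd : Bornology.IsBounded D)
    {X : Type*} [TopologicalSpace X]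
    [ChartedSpace (EuclideanSpace ℂ (Fin m)) X]
    [IsManifold 𝓘(ℂ, EuclideanSpace ℂ (Fin m)) (⊤ : ℕ∞) X]
    [ConnectedSpace X]
    {h : X → (Fin n → ℂ)}
    (hhol : MDifferentiable 𝓘(ℂ, EuclideanSpace ℂ (Fin m))
      𝓘(ℂ, Fin n → ℂ) h)
    (hcl : ∀ p : X, h p ∈ closure D)
    (hfront : ∃ p : X, h p ∈ frontier D) :
    (∀ p : X, h p ∈ frontier D) ∧
    (∀ x₀ : X, ∀ σ : (Fin n → ℂ) →ₗ[ℂ] ℂ,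
      (∀ z ∈ D, (σ z).re < (σ (h x₀)).re) →
      ∀ p : X, h p ∈ {y : Fin n → ℂ | y - h x₀ ∈ LinearMap.ker σ}) ∧
    (∀ p : X, h p ∈ ⋂ x : X, (closure D ∩
      ⋂ σ ∈ {σ : (Fin n → ℂ) →ₗ[ℂ] ℂ | ∀ z ∈ D, (σ z).re < (σ (h x)).re},
        {y : Fin n → ℂ | y - h x ∈ LinearMap.ker σ})) :=
  holomorphic_image_in_frontier_general hconv hopen hhol hcl hfront
end

section
/- Let Δⁿ ⊂ ℂⁿ be the unit polydisk (unit ball for the sup-norm ‖z‖ = max_j |z_j|). For ξ ∈ ∂Δⁿ, define ch(ξ) = {η ∈ ∂Δⁿ : [ξ,η] ⊆ ∂Δⁿ}. Then ch(ξ) = ⋃_{j : |ξ_j| = 1} {η ∈ ∂Δⁿ : η_j = ξ_j}. -/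
/-!
A boundary point `η` of the polydisk lies in `ch(ξ)` iff the midpoint of `ξ` and `η` lies on the
boundary, i.e. `‖ξ + η‖ = 2` in the sup-norm. This norm is attained at some coordinate `j`, where
`|ξ_j + η_j| = 2` with `|ξ_j|, |η_j| ≤ 1`; strict convexity of `ℂ` forces `ξ_j = η_j` of modulus
one. Conversely, a common unimodular coordinate stays constant along `[ξ, η]` and pins the
sup-norm of every point of the segment to `1`.
-/

open Metric

section StrictConvex

variable {E : Type*} [NormedAddCommGroup E] [NormedSpace ℝ E] [StrictConvexSpace ℝ E]

lemma norm_eq_one_and_eq_of_norm_add_eq_two {a b : E} (ha : ‖a‖ ≤ 1) (hb : ‖b‖ ≤ 1)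
    (hab : ‖a + b‖ = 2) : ‖a‖ = 1 ∧ b = a := by
  have hab_le : ‖a + b‖ ≤ ‖a‖ + ‖b‖ := norm_add_le a b
  have ha1 : ‖a‖ = 1 := by linarith
  have hb1 : ‖b‖ = 1 := by linarith
  refine ⟨ha1, (eq_of_norm_eq_of_norm_add_eq ?_ ?_).symm⟩ <;> linarith

end StrictConvex

lemma apply_eq_of_mem_segment {ι E : Type*} [AddCommGroup E] [Module ℝ E] {ξ η z : ι → E} {j : ι}
    (hj : η j = ξ j) (hz : z ∈ segment ℝ ξ η) : z j = ξ j := by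
  obtain ⟨a, b, -, -, hab, rfl⟩ := hz
  simp only [Pi.add_apply, Pi.smul_apply, hj, ← add_smul, hab, one_smul]

section SupNorm

variable {ι E : Type*} [Fintype ι] [NormedAddCommGroup E]

lemma exists_norm_apply_eq_pi_norm {x : ι → E} (hx : 0 < ‖x‖) : ∃ i, ‖x i‖ = ‖x‖ := by
  by_contra! h
  have hlt : ∀ i, ‖x i‖ < ‖x‖ := fun i => (norm_le_pi_norm x i).lt_of_ne (h i)
  exact (lt_irrefl _) ((pi_norm_lt_iff hx).2 hlt)

variable [NormedSpace ℝ E]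

lemma segment_subset_sphere_iff_exists_apply_eq [StrictConvexSpace ℝ E] {ξ η : ι → E}
    (hξ : ‖ξ‖ = 1) (hη : ‖η‖ = 1) :
    segment ℝ ξ η ⊆ sphere 0 1 ↔ ∃ j, ‖ξ j‖ = 1 ∧ η j = ξ j := by
  constructor
  · intro hseg
    have hmid : ‖(2⁻¹ : ℝ) • (ξ + η)‖ = 1 := by
      simpa [midpoint_eq_smul_add] using hseg (midpoint_mem_segment ξ η)
    have hsum : ‖ξ + η‖ = 2 := by
      rw [norm_smul, Real.norm_of_nonneg (by norm_num)] at hmid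
      linarith
    obtain ⟨j, hj⟩ := exists_norm_apply_eq_pi_norm (hsum ▸ two_pos : 0 < ‖ξ + η‖)
    exact ⟨j, norm_eq_one_and_eq_of_norm_add_eq_two (hξ ▸ norm_le_pi_norm ξ j)
      (hη ▸ norm_le_pi_norm η j) (hj.trans hsum)⟩
  · rintro ⟨j, hξj, hηj⟩ z hz
    have hz_le : ‖z‖ ≤ 1 := by
      have hball : segment ℝ ξ η ⊆ closedBall 0 1 :=
        (convex_closedBall 0 1).segment_subset (by simp [hξ]) (by simp [hη])
      simpa using hball hz
    have hz_ge : 1 ≤ ‖z‖ := by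
      simpa [apply_eq_of_mem_segment hηj hz, hξj] using norm_le_pi_norm z j
    simpa using le_antisymm hz_le hz_ge

end SupNorm

lemma frontier_setOf_norm_lt_one {E : Type*} [NormedAddCommGroup E] [NormedSpace ℝ E] :
    frontier {z : E | ‖z‖ < 1} = sphere 0 1 := by
  simpa [ball, dist_eq_norm] using frontier_ball (0 : E) one_ne_zero

theorem polydisk_ch_eq_general {n : ℕ} {ξ : Fin n → ℂ}
    (hξ : ξ ∈ frontier {z : Fin n → ℂ | ‖z‖ < 1}) :
    {η ∈ frontier {z : Fin n → ℂ | ‖z‖ < 1} |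
        segment ℝ ξ η ⊆ frontier {z : Fin n → ℂ | ‖z‖ < 1}} =
      ⋃ j ∈ {j : Fin n | ‖ξ j‖ = 1},
        {η ∈ frontier {z : Fin n → ℂ | ‖z‖ < 1} | η j = ξ j} := by
  rw [frontier_setOf_norm_lt_one] at hξ ⊢
  have hξ1 : ‖ξ‖ = 1 := mem_sphere_zero_iff_norm.1 hξ
  ext η
  simp only [Set.mem_ofPred_eq, Set.mem_iUnion, exists_prop]
  constructor
  · rintro ⟨hη, hseg⟩
    obtain ⟨j, hξj, hηj⟩ :=
      (segment_subset_sphere_iff_exists_apply_eq hξ1 (mem_sphere_zero_iff_norm.1 hη)).1 hseg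
    exact ⟨j, hξj, hη, hηj⟩
  · rintro ⟨j, hξj, hη, hηj⟩
    exact ⟨hη, (segment_subset_sphere_iff_exists_apply_eq hξ1
      (mem_sphere_zero_iff_norm.1 hη)).2 ⟨j, hξj, hηj⟩⟩

/-- In the unit polydisk `Δⁿ = {z ∈ ℂⁿ : max_j |z_j| < 1}`, for every boundary
point `ξ`, one has `ch(ξ) = ⋃_{j : |ξ_j|=1} {η ∈ ∂Δⁿ : η_j = ξ_j}`. -/
theorem polydisk_ch_eq {n : ℕ} (hn : 0 < n) {ξ : Fin n → ℂ}
    (hξ : ξ ∈ frontier {z : Fin n → ℂ | ‖z‖ < 1}) :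
    {η ∈ frontier {z : Fin n → ℂ | ‖z‖ < 1} |
        segment ℝ ξ η ⊆ frontier {z : Fin n → ℂ | ‖z‖ < 1}} =
      ⋃ j ∈ {j : Fin n | ‖ξ j‖ = 1},
        {η ∈ frontier {z : Fin n → ℂ | ‖z‖ < 1} | η j = ξ j} :=
  polydisk_ch_eq_general hξ
end

section
/- Let Δⁿ be the unit polydisk and ξ ∈ ∂Δⁿ. Then the intersection Ch(ξ) of the closed polydisk with all complex supporting hyperplanes at ξ equals ⋂_{j : |ξ_j| = 1} {η ∈ closure(Δⁿ) : η_j = ξ_j}. -/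
/-!
A supporting functional `σ` at `ξ` satisfies `Re σ ≤ Re σ ξ` on the closed polydisk. Replacing
the `i`-th coordinate of `ξ` by a suitable point of the unit circle then shows that `σ` kills the
`i`-th coordinate axis whenever `|ξ i| < 1`, so `σ (η - ξ) = 0` as soon as `η` agrees with `ξ` on
the coordinates where `|ξ j| = 1`. Conversely, for each such `j` the functional
`z ↦ conj (ξ j) * z j` is supporting at `ξ`, and its hyperplane forces `η j = ξ j`.
-/

open ComplexConjugate

def IsSupportingFunctional {E : Type*} [AddCommGroup E] [Module ℂ E] (σ : E →ₗ[ℂ] ℂ)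
    (s : Set E) (ξ : E) : Prop :=
  ∀ z ∈ s, (σ z).re < (σ ξ).re

theorem IsSupportingFunctional.re_le_of_mem_closure {E : Type*} [NormedAddCommGroup E]
    [NormedSpace ℂ E] [FiniteDimensional ℂ E] {σ : E →ₗ[ℂ] ℂ} {s : Set E} {ξ : E}
    (hσ : IsSupportingFunctional σ s ξ) {w : E} (hw : w ∈ closure s) :
    (σ w).re ≤ (σ ξ).re := by
  have hcont : Continuous fun z => (σ z).re :=
    Complex.continuous_re.comp σ.continuous_of_finiteDimensional
  exact closure_lt_subset_le hcont continuous_const (closure_mono hσ hw)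

theorem setOf_norm_lt_one_eq_ball {E : Type*} [SeminormedAddCommGroup E] :
    {z : E | ‖z‖ < 1} = Metric.ball 0 1 := by
  ext
  simp

section Polydisk

variable {ι : Type*} [Fintype ι]

theorem exists_norm_apply_eq_one {ξ : ι → ℂ} (hξ : ‖ξ‖ = 1) : ∃ j, ‖ξ j‖ = 1 := by
  by_contra! h
  have hlt : ‖ξ‖ < 1 := (pi_norm_lt_iff one_pos).2 fun j =>
    (norm_le_pi_norm ξ j |>.trans hξ.le).lt_of_ne (h j)
  exact hlt.ne hξ

theorem isSupportingFunctional_conj_smul_proj {ξ : ι → ℂ} {j : ι} (hj : ‖ξ j‖ = 1) :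
    IsSupportingFunctional (conj (ξ j) • LinearMap.proj j) {z : ι → ℂ | ‖z‖ < 1} ξ := by
  intro z hz
  have hξ : (conj (ξ j) * ξ j).re = 1 := by simp [Complex.conj_mul', hj]
  calc (conj (ξ j) * z j).re ≤ ‖conj (ξ j) * z j‖ := Complex.re_le_norm _
    _ = ‖z j‖ := by simp [hj]
    _ < 1 := (norm_le_pi_norm z j).trans_lt hz
    _ = (conj (ξ j) * ξ j).re := hξ.symm

variable [DecidableEq ι]

theorem IsSupportingFunctional.apply_single_eq_zero {σ : (ι → ℂ) →ₗ[ℂ] ℂ} {ξ : ι → ℂ}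
    (hσ : IsSupportingFunctional σ {z | ‖z‖ < 1} ξ) (hξ : ‖ξ‖ ≤ 1) {i : ι} (hi : ‖ξ i‖ < 1)
    (d : ℂ) : σ (Pi.single i d) = 0 := by
  set b := σ (Pi.single i 1)
  -- `c` is the point of the unit circle where `Re (· * b)` attains its maximum `‖b‖`
  set c : ℂ := conj b / ‖b‖
  have hcb : (c * b).re = ‖b‖ := by
    rw [div_mul_eq_mul_div, Complex.conj_mul', ← Complex.ofReal_pow, ← Complex.ofReal_div,
      Complex.ofReal_re, sq, mul_self_div_self]
  have hw : Function.update ξ i c ∈ closure {z : ι → ℂ | ‖z‖ < 1} := by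
    rw [setOf_norm_lt_one_eq_ball, closure_ball _ one_ne_zero, mem_closedBall_zero_iff,
      pi_norm_le_iff_of_nonneg zero_le_one]
    intro j
    rcases eq_or_ne j i with rfl | hj
    · simpa [c, norm_div] using div_self_le_one ‖b‖
    · simpa [hj] using (norm_le_pi_norm ξ j).trans hξ
  have hsingle : ∀ d : ℂ, σ (Pi.single i d) = d * b := fun d => by
    rw [← smul_eq_mul, ← map_smul, ← Pi.single_smul', smul_eq_mul, mul_one]
  have hupdate : σ (Function.update ξ i c) = σ ξ + (c - ξ i) * b := by
    rw [← hsingle, ← map_add]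
    congr 1
    ext j
    rcases eq_or_ne j i with rfl | hj <;> simp [*]
  have hle := hσ.re_le_of_mem_closure hw
  rw [hupdate, Complex.add_re, sub_mul, Complex.sub_re, hcb] at hle
  have hξb : (ξ i * b).re ≤ ‖ξ i‖ * ‖b‖ := (Complex.re_le_norm _).trans (norm_mul _ _).le
  have hb : b = 0 := norm_le_zero_iff.1 <| by nlinarith [norm_nonneg b]
  rw [hsingle, hb, mul_zero]

theorem IsSupportingFunctional.apply_sub_eq_zero {σ : (ι → ℂ) →ₗ[ℂ] ℂ} {ξ η : ι → ℂ}
    (hσ : IsSupportingFunctional σ {z | ‖z‖ < 1} ξ) (hξ : ‖ξ‖ ≤ 1)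
    (hη : ∀ j, ‖ξ j‖ = 1 → η j = ξ j) : σ (η - ξ) = 0 := by
  rw [← Finset.univ_sum_single (η - ξ), map_sum]
  refine Finset.sum_eq_zero fun j _ => ?_
  rcases ((norm_le_pi_norm ξ j).trans hξ).eq_or_lt with hj | hj
  · simp [hη j hj]
  · exact hσ.apply_single_eq_zero hξ hj _

end Polydisk

theorem polydisk_Ch_eq_general {n : ℕ} {ξ : Fin n → ℂ}
    (hξ : ξ ∈ frontier {z : Fin n → ℂ | ‖z‖ < 1}) :
    (closure {z : Fin n → ℂ | ‖z‖ < 1} ∩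
      ⋂ σ ∈ {σ : (Fin n → ℂ) →ₗ[ℂ] ℂ |
          ∀ z ∈ {z : Fin n → ℂ | ‖z‖ < 1}, (σ z).re < (σ ξ).re},
        {y : Fin n → ℂ | y - ξ ∈ LinearMap.ker σ}) =
      ⋂ j ∈ {j : Fin n | ‖ξ j‖ = 1},
        {η ∈ closure {z : Fin n → ℂ | ‖z‖ < 1} | η j = ξ j} := by
  rw [setOf_norm_lt_one_eq_ball, frontier_ball _ one_ne_zero, mem_sphere_zero_iff_norm] at hξ
  obtain ⟨j₀, hj₀⟩ := exists_norm_apply_eq_one hξ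
  ext η
  simp only [Set.mem_inter_iff, Set.mem_iInter, Set.mem_ofPred_eq, LinearMap.mem_ker]
  constructor
  · rintro ⟨hη, hker⟩ j hj
    have hσ := hker _ (isSupportingFunctional_conj_smul_proj hj)
    refine ⟨hη, sub_eq_zero.1 ((mul_eq_zero.1 hσ).resolve_left ?_)⟩
    rw [← norm_eq_zero, Complex.norm_conj, hj]
    exact one_ne_zero
  · intro hη
    exact ⟨(hη j₀ hj₀).1, fun σ hσ => IsSupportingFunctional.apply_sub_eq_zero hσ hξ.le
      fun j hj => (hη j hj).2⟩

/-- In the unit polydisk `Δⁿ`, for every boundary point `ξ`, the set `Ch(ξ)`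
(intersection of the closed polydisk with all complex supporting hyperplanes
at `ξ`) equals `⋂_{j : |ξ_j|=1} {η ∈ closure Δⁿ : η_j = ξ_j}`. -/
theorem polydisk_Ch_eq {n : ℕ} (hn : 0 < n) {ξ : Fin n → ℂ}
    (hξ : ξ ∈ frontier {z : Fin n → ℂ | ‖z‖ < 1}) :
    (closure {z : Fin n → ℂ | ‖z‖ < 1} ∩
      ⋂ σ ∈ {σ : (Fin n → ℂ) →ₗ[ℂ] ℂ |
          ∀ z ∈ {z : Fin n → ℂ | ‖z‖ < 1}, (σ z).re < (σ ξ).re},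
        {y : Fin n → ℂ | y - ξ ∈ LinearMap.ker σ}) =
      ⋂ j ∈ {j : Fin n | ‖ξ j‖ = 1},
        {η ∈ closure {z : Fin n → ℂ | ‖z‖ < 1} | η j = ξ j} :=
  polydisk_Ch_eq_general hξ
end

section
/- Fix ξ ∈ ∂Δⁿ and set x_ν = (1 − 1/ν)^{1/2} ξ for ν ≥ 1. Then for every z ∈ Δⁿ, the limit as ν → ∞ of max_{j : |ξ_j| = 1} { min_h { (1 − |x_{ν,h}|²)/(1 − |x_{ν,j}|²) } · |1 − conj(z_j) x_{ν,j}|²/(1 − |z_j|²) } exists and equals max_{j : |ξ_j| = 1} |ξ_j − z_j|²/(1 − |z_j|²). -/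
open Filter Topology ComplexConjugate

/-!
On the coordinates `j` with `|ξ_j| = 1` the quantity `1 - |x_{ν,h}|² = 1 - (1 - 1/ν)|ξ_h|²` is
minimal (equal to `1/ν`), so the inner minimum is identically `1` and the expression reduces to
`max_j |1 - conj(z_j) x_{ν,j}|² / (1 - |z_j|²)`. As `x_{ν,j} → ξ_j`, each term tends to
`|1 - conj(z_j) ξ_j|² / (1 - |z_j|²) = |ξ_j - z_j|² / (1 - |z_j|²)`, the last equality because
`|ξ_j| = 1`, and a maximum over finitely many indices commutes with the limit.
-/

theorem Filter.Tendsto.ciSup_of_finite {ι α L : Type*} [Finite ι] [ConditionallyCompleteLattice L]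
    [TopologicalSpace L] [ContinuousSup L] {l : Filter α} {f : ι → α → L} {g : ι → L}
    (hf : ∀ i, Tendsto (f i) l (𝓝 (g i))) :
    Tendsto (fun a ↦ ⨆ i, f i a) l (𝓝 (⨆ i, g i)) := by
  cases nonempty_fintype ι
  rcases isEmpty_or_nonempty ι with hι | hι
  · simpa only [iSup_of_empty'] using tendsto_const_nhds
  · simp only [← Finset.sup'_univ_eq_ciSup]
    exact Tendsto.finset_sup'_nhds_apply Finset.univ_nonempty fun i _ ↦ hf i

theorem norm_le_one_of_mem_frontier {E : Type*} [SeminormedAddGroup E] {x : E}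
    (hx : x ∈ frontier {y : E | ‖y‖ < 1}) : ‖x‖ ≤ 1 := by
  rw [← ball_zero_eq] at hx
  simpa using Metric.closure_ball_subset_closedBall (frontier_subset_closure hx)

theorem ciInf_div_eq_one {ι : Type*} {f : ι → ℝ} {j : ι} (hj : 0 < f j) (hle : ∀ i, f j ≤ f i) :
    ⨅ i, f i / f j = 1 := by
  have : Nonempty ι := ⟨j⟩
  have hge : ∀ i, 1 ≤ f i / f j := fun i ↦ (one_le_div hj).2 (hle i)
  refine le_antisymm ?_ (le_ciInf hge)
  calc ⨅ i, f i / f j ≤ f j / f j := ciInf_le ⟨1, by rintro _ ⟨i, rfl⟩; exact hge i⟩ j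
    _ = 1 := div_self hj.ne'

theorem Complex.norm_ofReal_sqrt_mul_sq {r : ℝ} (hr : 0 ≤ r) (w : ℂ) :
    ‖(√r : ℂ) * w‖ ^ 2 = r * ‖w‖ ^ 2 := by
  rw [norm_mul, mul_pow, Complex.norm_of_nonneg (Real.sqrt_nonneg _), Real.sq_sqrt hr]

theorem iInf_one_sub_norm_sqrt_mul_sq_div_eq_one {ι : Type*} {w : ι → ℂ} (hw : ∀ i, ‖w i‖ ≤ 1)
    {j : ι} (hj : ‖w j‖ = 1) {r : ℝ} (hr₀ : 0 ≤ r) (hr₁ : r < 1) :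
    ⨅ i, (1 - ‖(√r : ℂ) * w i‖ ^ 2) / (1 - ‖(√r : ℂ) * w j‖ ^ 2) = 1 := by
  simp only [Complex.norm_ofReal_sqrt_mul_sq hr₀]
  refine ciInf_div_eq_one (by rw [hj]; linarith) fun i ↦ ?_
  have : ‖w i‖ ^ 2 ≤ 1 := pow_le_one₀ (norm_nonneg _) (hw i)
  rw [hj]
  nlinarith

theorem Complex.norm_one_sub_conj_mul_eq_norm_sub {ξ z : ℂ} (hξ : ‖ξ‖ = 1) :
    ‖1 - conj z * ξ‖ = ‖ξ - z‖ := by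
  have hconj : conj ξ * ξ = 1 := by
    rw [mul_comm, Complex.mul_conj, Complex.normSq_eq_norm_sq, hξ]
    norm_num
  calc ‖1 - conj z * ξ‖ = ‖conj (ξ - z) * ξ‖ := by rw [map_sub, sub_mul, hconj]
    _ = ‖ξ - z‖ := by rw [norm_mul, Complex.norm_conj, hξ, mul_one]

theorem tendsto_sqrt_one_sub_one_div_natCast :
    Tendsto (fun ν : ℕ ↦ √(1 - 1 / (ν : ℝ))) atTop (𝓝 1) := by
  have h : Tendsto (fun ν : ℕ ↦ 1 - 1 / (ν : ℝ)) atTop (𝓝 1) := by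
    simpa using (tendsto_const_nhds (x := (1 : ℝ))).sub tendsto_one_div_atTop_nhds_zero_nat
  simpa [Function.comp_def] using (Real.continuous_sqrt.tendsto 1).comp h

theorem polydisk_horosphere_sequence_general {n : ℕ} {ξ : Fin n → ℂ}
    (hξ : ξ ∈ frontier {z : Fin n → ℂ | ‖z‖ < 1})
    {z : Fin n → ℂ} :
    Filter.Tendsto
      (fun ν : ℕ =>
        ⨆ j : {j : Fin n // ‖ξ j‖ = 1},
          (⨅ h : Fin n,
              (1 - ‖(Real.sqrt (1 - 1/(ν:ℝ)) : ℂ) * ξ h‖ ^ 2) /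
                (1 - ‖(Real.sqrt (1 - 1/(ν:ℝ)) : ℂ) * ξ j.1‖ ^ 2)) *
            ‖1 - conj (z j.1) *
                ((Real.sqrt (1 - 1/(ν:ℝ)) : ℂ) * ξ j.1)‖ ^ 2 /
              (1 - ‖z j.1‖ ^ 2))
      Filter.atTop
      (nhds (⨆ j : {j : Fin n // ‖ξ j‖ = 1},
        ‖ξ j.1 - z j.1‖ ^ 2 / (1 - ‖z j.1‖ ^ 2))) := by
  have hξ_le : ∀ h, ‖ξ h‖ ≤ 1 := fun h ↦
    (norm_le_pi_norm ξ h).trans (norm_le_one_of_mem_frontier hξ)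
  have hterm : ∀ j : {j : Fin n // ‖ξ j‖ = 1}, Tendsto
      (fun ν : ℕ ↦ ‖1 - conj (z j.1) * ((√(1 - 1 / (ν : ℝ)) : ℂ) * ξ j.1)‖ ^ 2 / (1 - ‖z j.1‖ ^ 2))
      atTop (𝓝 (‖ξ j.1 - z j.1‖ ^ 2 / (1 - ‖z j.1‖ ^ 2))) := by
    intro j
    have hcont : Continuous fun t : ℝ ↦
        ‖1 - conj (z j.1) * ((t : ℂ) * ξ j.1)‖ ^ 2 / (1 - ‖z j.1‖ ^ 2) := by fun_prop
    simpa [Function.comp_def, ← Complex.norm_one_sub_conj_mul_eq_norm_sub j.2] using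
      (hcont.tendsto 1).comp tendsto_sqrt_one_sub_one_div_natCast
  refine (Tendsto.ciSup_of_finite hterm).congr' ?_
  filter_upwards [eventually_ge_atTop 1] with ν hν
  have hν' : (0 : ℝ) < ν := by exact_mod_cast hν
  have hr₀ : 0 ≤ 1 - 1 / (ν : ℝ) :=
    sub_nonneg.2 ((div_le_one hν').2 (by exact_mod_cast hν))
  have hr₁ : 1 - 1 / (ν : ℝ) < 1 := sub_lt_self _ (one_div_pos.2 hν')
  refine iSup_congr fun j ↦ ?_
  rw [iInf_one_sub_norm_sqrt_mul_sq_div_eq_one hξ_le j.2 hr₀ hr₁, one_mul]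

/-- For `ξ ∈ ∂Δⁿ` and `x_ν = (1 - 1/ν)^{1/2} ξ`, for every `z ∈ Δⁿ` the limit
as `ν → ∞` of
`max_{j : |ξ_j|=1} { min_h {(1-|x_{ν,h}|²)/(1-|x_{ν,j}|²)} · |1-conj(z_j)x_{ν,j}|²/(1-|z_j|²) }`
exists and equals `max_{j : |ξ_j|=1} |ξ_j - z_j|²/(1-|z_j|²)`; thus `{x_ν}` is
a horosphere sequence at `ξ`. -/
theorem polydisk_horosphere_sequence {n : ℕ} (hn : 0 < n) {ξ : Fin n → ℂ}
    (hξ : ξ ∈ frontier {z : Fin n → ℂ | ‖z‖ < 1})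
    {z : Fin n → ℂ} (hz : z ∈ {z : Fin n → ℂ | ‖z‖ < 1}) :
    Filter.Tendsto
      (fun ν : ℕ =>
        ⨆ j : {j : Fin n // ‖ξ j‖ = 1},
          (⨅ h : Fin n,
              (1 - ‖(Real.sqrt (1 - 1/(ν:ℝ)) : ℂ) * ξ h‖ ^ 2) /
                (1 - ‖(Real.sqrt (1 - 1/(ν:ℝ)) : ℂ) * ξ j.1‖ ^ 2)) *
            ‖1 - conj (z j.1) *
                ((Real.sqrt (1 - 1/(ν:ℝ)) : ℂ) * ξ j.1)‖ ^ 2 /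
              (1 - ‖z j.1‖ ^ 2))
      Filter.atTop
      (nhds (⨆ j : {j : Fin n // ‖ξ j‖ = 1},
        ‖ξ j.1 - z j.1‖ ^ 2 / (1 - ‖z j.1‖ ^ 2))) :=
  polydisk_horosphere_sequence_general hξ
end

section
/- Let D ⊂ ℂⁿ be a bounded convex open set, z₀ ∈ D, and {x_ν} ⊂ D a horosphere sequence at x ∈ ∂D (i.e., lim_ν [k_D(z,x_ν) − k_D(z₀,x_ν)] exists for every z ∈ D). Then for 0 < R₁ < R₂, G_{z₀}(x,R₁,{x_ν}) ⊆ G_{z₀}(x,R₂,{x_ν}), and the sequence horosphere G_{z₀}(x,R,{x_ν}) = {z ∈ D : lim_ν [k_D(z,x_ν) − k_D(z₀,x_ν)] < (1/2) log R} is convex for every R > 0. -/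
/-!
For each `y ∈ D` the hypothesis on `k` (with `z₂ = w₂ = y`) says that `z ↦ k z y` is
quasiconvex on `D`, i.e. `k (s z + (1 - s) w) y ≤ max (k z y) (k w y)`. Quasiconvexity survives
subtracting the constant `k z₀ x_ν` and passing to the pointwise limit in `ν`, so the limit
function `z ↦ lim_ν [k z x_ν - k z₀ x_ν]` is quasiconvex on `D`, and the horosphere is one of its
strict sublevel sets. Monotonicity in `R` is monotonicity of `log`.
-/

open Filter Topology

section Quasiconvex

variable {𝕜 E β ι : Type*} [Semiring 𝕜] [PartialOrder 𝕜] [AddCommMonoid E] [SMul 𝕜 E] {s : Set E}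

theorem QuasiconvexOn.sub_const [AddCommGroup β] [LinearOrder β] [IsOrderedAddMonoid β]
    {f : E → β} (hf : QuasiconvexOn 𝕜 s f) (c : β) : QuasiconvexOn 𝕜 s (fun x => f x - c) := by
  intro r
  simpa only [sub_le_iff_le_add] using hf (r + c)

variable [LinearOrder β] [TopologicalSpace β] [OrderClosedTopology β]

theorem quasiconvexOn_of_tendsto {l : Filter ι} [l.NeBot] {F : ι → E → β} {f : E → β}
    (hF : ∀ i, QuasiconvexOn 𝕜 s (F i)) (hs : Convex 𝕜 s)
    (hlim : ∀ x ∈ s, Tendsto (fun i => F i x) l (𝓝 (f x))) : QuasiconvexOn 𝕜 s f := by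
  refine quasiconvexOn_iff_le_max.2 ⟨hs, fun x hx y hy a b ha hb hab => ?_⟩
  have hxy : a • x + b • y ∈ s := hs hx hy ha hb hab
  exact le_of_tendsto_of_tendsto' (hlim _ hxy) ((hlim x hx).max (hlim y hy)) fun i =>
    (quasiconvexOn_iff_le_max.1 (hF i)).2 hx hy ha hb hab

theorem convex_setOf_tendsto_lt [Nonempty β] {l : Filter ι} [l.NeBot] {F : ι → E → β}
    (hF : ∀ i, QuasiconvexOn 𝕜 s (F i)) (hs : Convex 𝕜 s)
    (hlim : ∀ x ∈ s, ∃ a, Tendsto (fun i => F i x) l (𝓝 a)) (c : β) :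
    Convex 𝕜 {x ∈ s | ∃ a, Tendsto (fun i => F i x) l (𝓝 a) ∧ a < c} := by
  set f : E → β := fun x => limUnder l fun i => F i x
  have hf : ∀ x ∈ s, Tendsto (fun i => F i x) l (𝓝 (f x)) := fun x hx =>
    tendsto_nhds_limUnder (hlim x hx)
  have hset : {x ∈ s | ∃ a, Tendsto (fun i => F i x) l (𝓝 a) ∧ a < c} = {x ∈ s | f x < c} := by
    ext x
    refine ⟨fun ⟨hx, a, ha, hac⟩ => ⟨hx, tendsto_nhds_unique (hf x hx) ha ▸ hac⟩,
      fun ⟨hx, hfx⟩ => ⟨hx, f x, hf x hx, hfx⟩⟩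
  rw [hset]
  exact (quasiconvexOn_of_tendsto hF hs hf).convex_lt c

end Quasiconvex

theorem setOf_tendsto_lt_mono {α ι β : Type*} [Preorder β] [TopologicalSpace β]
    {s : Set α} {l : Filter ι} {F : ι → α → β} {c₁ c₂ : β} (hc : c₁ ≤ c₂) :
    {x ∈ s | ∃ a, Tendsto (fun i => F i x) l (𝓝 a) ∧ a < c₁} ⊆
      {x ∈ s | ∃ a, Tendsto (fun i => F i x) l (𝓝 a) ∧ a < c₂} :=
  fun _ ⟨hx, a, ha, hac⟩ => ⟨hx, a, ha, hac.trans_le hc⟩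

theorem sequence_horosphere_mono_convex_general {n : ℕ} {D : Set (Fin n → ℂ)}
    (hconv : Convex ℝ D)
    (k : (Fin n → ℂ) → (Fin n → ℂ) → ℝ)  -- the Kobayashi distance of `D`
    (hk_convex : ∀ z₁ ∈ D, ∀ z₂ ∈ D, ∀ w₁ ∈ D, ∀ w₂ ∈ D, ∀ s ∈ Set.Icc (0:ℝ) 1,
      k (s • z₁ + (1 - s) • w₁) (s • z₂ + (1 - s) • w₂) ≤ max (k z₁ z₂) (k w₁ w₂))
    {z₀ : Fin n → ℂ}
    {xs : ℕ → Fin n → ℂ} (hxs : ∀ ν, xs ν ∈ D)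
    -- `{x_ν}` is a horosphere sequence at `x`:
    (hhoro : ∀ z ∈ D, ∃ l : ℝ,
      Filter.Tendsto (fun ν => k z (xs ν) - k z₀ (xs ν)) Filter.atTop (nhds l)) :
    (∀ R₁ R₂ : ℝ, 0 < R₁ → R₁ < R₂ →
      {z ∈ D | ∃ l : ℝ,
          Filter.Tendsto (fun ν => k z (xs ν) - k z₀ (xs ν)) Filter.atTop (nhds l)
            ∧ l < (1/2) * Real.log R₁} ⊆
        {z ∈ D | ∃ l : ℝ,
          Filter.Tendsto (fun ν => k z (xs ν) - k z₀ (xs ν)) Filter.atTop (nhds l)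
            ∧ l < (1/2) * Real.log R₂}) ∧
    (∀ R : ℝ, 0 < R →
      Convex ℝ {z ∈ D | ∃ l : ℝ,
        Filter.Tendsto (fun ν => k z (xs ν) - k z₀ (xs ν)) Filter.atTop (nhds l)
          ∧ l < (1/2) * Real.log R}) := by
  have hquasi : ∀ y ∈ D, QuasiconvexOn ℝ D (fun z => k z y) := fun y hy =>
    quasiconvexOn_iff_le_max.2 ⟨hconv, fun z hz w hw a b ha hb hab => by
      obtain rfl : b = 1 - a := by linarith
      simpa only [Convex.combo_self hab y] using
        hk_convex z hz y hy w hw y hy a ⟨ha, by linarith⟩⟩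
  refine ⟨fun R₁ R₂ hR₁ hR₁₂ => setOf_tendsto_lt_mono ?_, fun R _ =>
    convex_setOf_tendsto_lt (fun ν => (hquasi _ (hxs ν)).sub_const _) hconv hhoro _⟩
  linarith [Real.log_le_log hR₁ hR₁₂.le]

/-- Sequence horospheres `G_{z₀}(x,R,{x_ν})` attached to a horosphere sequence
`{x_ν}` are monotone in `R` and convex. -/
theorem sequence_horosphere_mono_convex {n : ℕ} {D : Set (Fin n → ℂ)}
    (hconv : Convex ℝ D) (hopen : IsOpen D) (hbd : Bornology.IsBounded D)
    (k : (Fin n → ℂ) → (Fin n → ℂ) → ℝ)  -- the Kobayashi distance of `D`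
    (hk_convex : ∀ z₁ ∈ D, ∀ z₂ ∈ D, ∀ w₁ ∈ D, ∀ w₂ ∈ D, ∀ s ∈ Set.Icc (0:ℝ) 1,
      k (s • z₁ + (1 - s) • w₁) (s • z₂ + (1 - s) • w₂) ≤ max (k z₁ z₂) (k w₁ w₂))
    {z₀ : Fin n → ℂ} (hz₀ : z₀ ∈ D) {x : Fin n → ℂ} (hx : x ∈ frontier D)
    {xs : ℕ → Fin n → ℂ} (hxs : ∀ ν, xs ν ∈ D)
    (hx_lim : Filter.Tendsto xs Filter.atTop (nhds x))
    -- `{x_ν}` is a horosphere sequence at `x`: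
    (hhoro : ∀ z ∈ D, ∃ l : ℝ,
      Filter.Tendsto (fun ν => k z (xs ν) - k z₀ (xs ν)) Filter.atTop (nhds l)) :
    (∀ R₁ R₂ : ℝ, 0 < R₁ → R₁ < R₂ →
      {z ∈ D | ∃ l : ℝ,
          Filter.Tendsto (fun ν => k z (xs ν) - k z₀ (xs ν)) Filter.atTop (nhds l)
            ∧ l < (1/2) * Real.log R₁} ⊆
        {z ∈ D | ∃ l : ℝ,
          Filter.Tendsto (fun ν => k z (xs ν) - k z₀ (xs ν)) Filter.atTop (nhds l)
            ∧ l < (1/2) * Real.log R₂}) ∧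
    (∀ R : ℝ, 0 < R →
      Convex ℝ {z ∈ D | ∃ l : ℝ,
        Filter.Tendsto (fun ν => k z (xs ν) - k z₀ (xs ν)) Filter.atTop (nhds l)
          ∧ l < (1/2) * Real.log R}) :=
  sequence_horosphere_mono_convex_general hconv k hk_convex hxs hhoro
end
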